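/- If f is a (1,2)-sensitive bucketing function on Σⁿ and b is a bucket containing some sequence s, then all sequences assigned to bucket b differ from s only at one single fixed position; in particular, bucket b contains at most |Σ| sequences. -/

import Mathlib

/-!
Two sequences sharing a bucket must have edit distance at most `1`, since buckets of sequences at
distance `≥ 2` are disjoint. Between sequences of equal length, every insertion must be paired
with a deletion, so edit distance `≤ 1` means they differ in at most one position. If some
member `t₀` of the bucket differs from `s` at position `i`, a member `t` differing from `s` at
some `j ≠ i` would differ from `t₀` at both `i` and `j`. Hence all members agree with `s` off `i`,
and a member is determined by its letter at `i`.
-/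

/-- Cost structure for edit distance (removed from Mathlib; restored with its old meaning). -/
structure Levenshtein.Cost (α β δ : Type*) where
  delete : α → δ
  insert : β → δ
  substitute : α → β → δ

/-- The default cost: all operations cost 1, substituting equal letters costs 0. -/
def Levenshtein.defaultCost {α : Type*} [DecidableEq α] : Levenshtein.Cost α α ℕ where
  delete _ := 1
  insert _ := 1
  substitute a b := if a = b then 0 else 1

/-- Auxiliary step of the dynamic program (as in the old Mathlib). -/
def Levenshtein.impl {α β δ : Type*} [AddZeroClass δ] [Min δ] (C : Levenshtein.Cost α β δ)
    (xs : List α) (y : β) (d : {r : List δ // 0 < r.length}) : {r : List δ // 0 < r.length} :=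
  let ⟨ds, w⟩ := d
  xs.zip (ds.zip ds.tail) |>.foldr
    (init := ⟨[C.insert y + ds.getLast (List.ne_nil_of_length_pos w)], by simp⟩)
    (fun ⟨x, d₀, d₁⟩ ⟨r, w⟩ =>
      ⟨min (C.delete x + r[0]) (min (C.insert y + d₀) (C.substitute x y + d₁)) :: r, by simp⟩)

/-- Edit distances of all suffixes of `xs` against `ys` (as in the old Mathlib). -/
def suffixLevenshtein {α β δ : Type*} [AddZeroClass δ] [Min δ] (C : Levenshtein.Cost α β δ)
    (xs : List α) (ys : List β) : {r : List δ // 0 < r.length} :=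
  ys.foldr
    (Levenshtein.impl C xs)
    (xs.foldr (init := ⟨[0], by simp⟩) (fun a ⟨r, w⟩ => ⟨(C.delete a + r[0]) :: r, by simp⟩))

/-- Levenshtein distance with cost `C` (as in the old Mathlib). -/
def levenshtein {α β δ : Type*} [AddZeroClass δ] [Min δ] (C : Levenshtein.Cost α β δ)
    (xs : List α) (ys : List β) : δ :=
  let ⟨r, w⟩ := suffixLevenshtein C xs ys
  r[0]

/-- Edit (Levenshtein) distance between two length-`n` sequences over `α`. -/
def editDist {α : Type*} [DecidableEq α] {n : ℕ} (s t : Fin n → α) : ℕ :=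
  levenshtein Levenshtein.defaultCost (List.ofFn s) (List.ofFn t)

/-- `f` is a `(d₁, d₂)`-sensitive bucketing function. -/
def IsSensitive {α B : Type*} [DecidableEq α] {n : ℕ} (d₁ d₂ : ℕ)
    (f : (Fin n → α) → Set B) : Prop :=
  (∀ s t : Fin n → α, editDist s t ≤ d₁ → (f s ∩ f t).Nonempty) ∧
  (∀ s t : Fin n → α, d₂ ≤ editDist s t → f s ∩ f t = ∅)

section Levenshtein

variable {α β δ : Type*} [AddZeroClass δ] [Min δ] (C : Levenshtein.Cost α β δ)

theorem Levenshtein.impl_length (xs : List α) (y : β) (d : {r : List δ // 0 < r.length})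
    (w : d.1.length = xs.length + 1) : (impl C xs y d).1.length = xs.length + 1 := by
  induction xs generalizing d with
  | nil => rfl
  | cons x xs ih =>
    match d, w with
    | ⟨_ :: d₂ :: ds, _⟩, w => exact congrArg (· + 1) (ih ⟨d₂ :: ds, by simp⟩ (by simpa using w))

theorem Levenshtein.impl_cons (x : α) (xs : List α) (y : β) (d : δ) (ds : List δ)
    (w : 0 < (d :: ds).length) (w' : 0 < ds.length) :
    impl C (x :: xs) y ⟨d :: ds, w⟩ =
      let ⟨r, w⟩ := impl C xs y ⟨ds, w'⟩
      ⟨min (C.delete x + r[0]) (min (C.insert y + d) (C.substitute x y + ds[0])) :: r, by simp⟩ :=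
  match ds, w' with | _ :: _, _ => rfl

theorem suffixLevenshtein_length (xs : List α) (ys : List β) :
    (suffixLevenshtein C xs ys).1.length = xs.length + 1 := by
  induction ys with
  | nil => induction xs <;> simp_all [suffixLevenshtein]
  | cons y ys ih => exact Levenshtein.impl_length C xs y _ ih

theorem suffixLevenshtein_cons₁ (x : α) (xs : List α) (ys : List β) :
    suffixLevenshtein C (x :: xs) ys =
      ⟨levenshtein C (x :: xs) ys :: (suffixLevenshtein C xs ys).1, by simp⟩ := by
  induction ys with
  | nil => rfl
  | cons y ys ih =>
    apply Subtype.ext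
    rw [← List.cons_head_tail (List.ne_nil_of_length_pos (suffixLevenshtein C _ _).2),
      List.head_eq_getElem]
    congr 1
    change (Levenshtein.impl C (x :: xs) y (suffixLevenshtein C (x :: xs) ys)).1.tail = _
    rw [ih, Levenshtein.impl_cons (w' := by simp [suffixLevenshtein_length])]
    rfl

theorem levenshtein_nil_cons (y : β) (ys : List β) :
    levenshtein C [] (y :: ys) = C.insert y + levenshtein C [] ys := by
  have hlen := suffixLevenshtein_length C ([] : List α) ys
  change (Levenshtein.impl C [] y (suffixLevenshtein C [] ys)).1[0]'(Levenshtein.impl C [] y _).2 =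
    C.insert y + (suffixLevenshtein C [] ys).1[0]'(suffixLevenshtein C [] ys).2
  generalize suffixLevenshtein C [] ys = r at hlen ⊢
  match r, hlen with | ⟨[_], _⟩, _ => rfl

theorem levenshtein_cons_nil (x : α) (xs : List α) :
    levenshtein C (x :: xs) ([] : List β) = C.delete x + levenshtein C xs [] := rfl

theorem levenshtein_cons_cons (x : α) (xs : List α) (y : β) (ys : List β) :
    levenshtein C (x :: xs) (y :: ys) =
      min (C.delete x + levenshtein C xs (y :: ys))
        (min (C.insert y + levenshtein C (x :: xs) ys)
          (C.substitute x y + levenshtein C xs ys)) := by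
  have h : suffixLevenshtein C (x :: xs) (y :: ys) =
      ⟨min (C.delete x + levenshtein C xs (y :: ys))
        (min (C.insert y + levenshtein C (x :: xs) ys) (C.substitute x y + levenshtein C xs ys)) ::
          (suffixLevenshtein C xs (y :: ys)).1, by simp⟩ := by
    change Levenshtein.impl C (x :: xs) y (suffixLevenshtein C (x :: xs) ys) = _
    rw [suffixLevenshtein_cons₁, Levenshtein.impl_cons (w' := by simp [suffixLevenshtein_length])]
    rfl
  exact congrArg (fun r => r.1[0]'r.2) h

end Levenshtein

section DefaultCost

variable {α : Type*} [DecidableEq α]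

theorem levenshtein_defaultCost_cons_cons (a b : α) (xs ys : List α) :
    levenshtein Levenshtein.defaultCost (a :: xs) (b :: ys) =
      min (1 + levenshtein Levenshtein.defaultCost xs (b :: ys))
        (min (1 + levenshtein Levenshtein.defaultCost (a :: xs) ys)
          ((if a = b then 0 else 1) + levenshtein Levenshtein.defaultCost xs ys)) :=
  levenshtein_cons_cons _ a xs b ys

theorem eq_of_levenshtein_defaultCost_eq_zero :
    ∀ {l₁ l₂ : List α}, levenshtein Levenshtein.defaultCost l₁ l₂ = 0 → l₁ = l₂
  | [], [], _ => rfl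
  | [], b :: ys, h => by simp [levenshtein_nil_cons, Levenshtein.defaultCost] at h
  | a :: xs, [], h => by simp [levenshtein_cons_nil, Levenshtein.defaultCost] at h
  | a :: xs, b :: ys, h => by
    rw [levenshtein_defaultCost_cons_cons] at h
    split_ifs at h with hab
    · rw [hab, eq_of_levenshtein_defaultCost_eq_zero (l₁ := xs) (l₂ := ys) (by omega)]
    · omega

theorem levenshtein_defaultCost_cons_cons_le_one_cases {a b : α} {xs ys : List α}
    (hlen : xs.length = ys.length)
    (h : levenshtein Levenshtein.defaultCost (a :: xs) (b :: ys) ≤ 1) :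
    a = b ∧ levenshtein Levenshtein.defaultCost xs ys ≤ 1 ∨ xs = ys := by
  rw [levenshtein_defaultCost_cons_cons] at h
  have hdel : levenshtein Levenshtein.defaultCost xs (b :: ys) ≠ 0 := fun h0 => by
    simpa [hlen] using congrArg List.length (eq_of_levenshtein_defaultCost_eq_zero h0)
  have hins : levenshtein Levenshtein.defaultCost (a :: xs) ys ≠ 0 := fun h0 => by
    simpa [hlen] using congrArg List.length (eq_of_levenshtein_defaultCost_eq_zero h0)
  split_ifs at h with hab
  · exact Or.inl ⟨hab, by omega⟩
  · exact Or.inr (eq_of_levenshtein_defaultCost_eq_zero (by omega))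

theorem exists_forall_ne_getElem_eq_of_levenshtein_le_one :
    ∀ {l₁ l₂ : List α} (hlen : l₁.length = l₂.length),
      levenshtein Levenshtein.defaultCost l₁ l₂ ≤ 1 →
      ∃ k, ∀ i (hi : i < l₁.length), i ≠ k → l₁[i] = l₂[i]
  | [], [], _, _ => ⟨0, fun _ hi => absurd hi (by simp)⟩
  | a :: xs, b :: ys, hlen, h => by
    rcases levenshtein_defaultCost_cons_cons_le_one_cases (by simpa using hlen) h with
      ⟨rfl, htail⟩ | rfl
    · obtain ⟨k, hk⟩ :=
        exists_forall_ne_getElem_eq_of_levenshtein_le_one (by simpa using hlen) htail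
      refine ⟨k + 1, fun i hi hik => ?_⟩
      cases i with
      | zero => rfl
      | succ i => exact hk i (by simpa using hi) (by omega)
    · refine ⟨0, fun i hi hi0 => ?_⟩
      cases i with
      | zero => exact absurd rfl hi0
      | succ i => rfl

end DefaultCost

theorem hammingDist_le_one_of_editDist_le_one {α : Type*} [DecidableEq α] {n : ℕ}
    {s t : Fin n → α} (h : editDist s t ≤ 1) : hammingDist s t ≤ 1 := by
  obtain ⟨k, hk⟩ := exists_forall_ne_getElem_eq_of_levenshtein_le_one (by simp) h
  have hne : ∀ i : Fin n, s i ≠ t i → (i : ℕ) = k := fun i hi => by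
    by_contra hik
    simpa [hi] using hk i (by simp) hik
  refine Finset.card_le_one.mpr fun i hi j hj => Fin.ext ?_
  rw [hne i (by simpa using hi), hne j (by simpa using hj)]

theorem eq_of_hammingDist_le_one {ι : Type*} [Fintype ι] {β : ι → Type*}
    [∀ i, DecidableEq (β i)] {x y : ∀ i, β i} (h : hammingDist x y ≤ 1) {i j : ι}
    (hi : x i ≠ y i) (hj : x j ≠ y j) : i = j :=
  Finset.card_le_one.mp h i (by simpa using hi) j (by simpa using hj)

theorem exists_forall_ne_eq_of_hammingDist_le_one {ι : Type*} [Fintype ι] [Nonempty ι]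
    {β : ι → Type*} [∀ i, DecidableEq (β i)] {M : Set (∀ i, β i)} {s : ∀ i, β i} (hs : s ∈ M)
    (hM : ∀ x ∈ M, ∀ y ∈ M, hammingDist x y ≤ 1) :
    ∃ i, ∀ t ∈ M, ∀ j, j ≠ i → t j = s j := by
  by_cases hall : ∀ t ∈ M, t = s
  · exact ⟨Classical.arbitrary ι, fun t ht j _ => by rw [hall t ht]⟩
  obtain ⟨t₀, ht₀, ht₀s⟩ := not_forall₂.mp hall
  obtain ⟨i, hi⟩ := Function.ne_iff.mp ht₀s
  refine ⟨i, fun t ht j hji => by_contra fun htj => hji ?_⟩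
  have hti : t i = s i := by_contra fun h => hji (eq_of_hammingDist_le_one (hM t ht s hs) htj h)
  have ht₀j : t₀ j = s j := by_contra fun h => hji (eq_of_hammingDist_le_one (hM t₀ ht₀ s hs) h hi)
  exact eq_of_hammingDist_le_one (hM t ht t₀ ht₀) (ht₀j ▸ htj) (hti ▸ Ne.symm hi)

theorem ncard_le_card_of_forall_ne_eq {ι α : Type*} [Finite α] {M : Set (ι → α)} {s : ι → α}
    {i : ι} (h : ∀ t ∈ M, ∀ j, j ≠ i → t j = s j) : M.ncard ≤ Nat.card α := by
  have hinj : Set.InjOn (fun t => t i) M := fun t ht u hu (hi : t i = u i) => funext fun j => by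
    by_cases hj : j = i
    · rw [hj, hi]
    · rw [h t ht j hj, h u hu j hj]
  simpa using Set.ncard_le_ncard_of_injOn _ (fun _ _ => Set.mem_univ _) hinj

theorem IsSensitive.editDist_lt {α B : Type*} [DecidableEq α] {n d₁ d₂ : ℕ}
    {f : (Fin n → α) → Set B} (hf : IsSensitive d₁ d₂ f) {s t : Fin n → α} {b : B}
    (hs : b ∈ f s) (ht : b ∈ f t) : editDist s t < d₂ :=
  Nat.lt_of_not_le fun h => (hf.2 s t h).subset ⟨hs, ht⟩

theorem stmt5_general {α B : Type*} [Fintype α] [DecidableEq α]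
    {n : ℕ} (hn : 0 < n) (f : (Fin n → α) → Set B) (hf : IsSensitive 1 2 f)
    (s : Fin n → α) (b : B) (hb : b ∈ f s) :
    (∃ i : Fin n, ∀ t : Fin n → α, b ∈ f t → ∀ j : Fin n, j ≠ i → t j = s j) ∧
    Set.ncard {t : Fin n → α | b ∈ f t} ≤ Fintype.card α := by
  have : Nonempty (Fin n) := ⟨⟨0, hn⟩⟩
  have hclose : ∀ t ∈ {t | b ∈ f t}, ∀ u ∈ {t | b ∈ f t}, hammingDist t u ≤ 1 :=
    fun t ht u hu =>
      hammingDist_le_one_of_editDist_le_one (Nat.lt_succ_iff.mp (hf.editDist_lt ht hu))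
  obtain ⟨i, hi⟩ := exists_forall_ne_eq_of_hammingDist_le_one (M := {t | b ∈ f t}) hb hclose
  exact ⟨⟨i, hi⟩, Nat.card_eq_fintype_card (α := α) ▸ ncard_le_card_of_forall_ne_eq hi⟩

theorem stmt5 {α B : Type*} [Fintype α] [DecidableEq α] (hα : 1 < Fintype.card α)
    {n : ℕ} (hn : 0 < n) (f : (Fin n → α) → Set B) (hf : IsSensitive 1 2 f)
    (s : Fin n → α) (b : B) (hb : b ∈ f s) :
    (∃ i : Fin n, ∀ t : Fin n → α, b ∈ f t → ∀ j : Fin n, j ≠ i → t j = s j) ∧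
    Set.ncard {t : Fin n → α | b ∈ f t} ≤ Fintype.card α :=
  stmt5_general hn f hf s b hb
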